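/- arXiv:1605.04459 — 2 statements merged into one kernel-verified Lean document; each statement's English description precedes it below -/
import Mathlib

section
/- Let $\mathbf{k}$ be a field of characteristic $2$, $V$ a $\mathbf{k}$-vector space with basis, and $k > 1$. Define $Q$ on sums of distinct basis pure tensors by $Q(v_1 + \cdots + v_r) = \sum_{1 \leq i < j \leq r} v_i \wedge v_j$, where each $v_i$ is a wedge of $k$ distinct basis vectors. Then $Q$ vanishes on every pure tensor $w_1 \wedge \cdots \wedge w_k$ (not just those formed from basis vectors). -/
open ExteriorAlgebra

/-! Two pure tensors that differ only in the `i`-th factor share every other factor, so (as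
`k > 1`) their wedge product vanishes. Hence, as a function of the `i`-th factor with the others
fixed, `x ↦ Q (w₁ ∧ ⋯ ∧ x ∧ ⋯ ∧ wₖ)` is additive and scales by `c²`, so it vanishes everywhere
once it vanishes on the basis. Starting from wedges of basis vectors, the factors are replaced by
arbitrary vectors one at a time. -/

lemma ExteriorAlgebra.ιMulti_mul_ιMulti_eq_zero_of_apply_eq {R M : Type*} [CommRing R]
    [AddCommGroup M] [Module R M] {m n : ℕ} {x : Fin m → M} {y : Fin n → M}
    {i : Fin m} {j : Fin n} (h : x i = y j) :
    ιMulti R m x * ιMulti R n y = 0 := by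
  rw [ιMulti_mul_ιMulti]
  refine ιMulti_eq_zero_of_not_inj fun hinj => ?_
  have := hinj (a₁ := Fin.castAdd n i) (a₂ := Fin.natAdd m j) (by simpa using h)
  exact absurd (congrArg Fin.val this) (by simp; omega)

lemma Module.Basis.eq_zero_of_map_add_of_map_smul_sq {ι R M N : Type*} [CommRing R]
    [AddCommGroup M] [Module R M] [AddCommGroup N] [Module R N] (b : Module.Basis ι R M)
    {g : M → N} (hadd : ∀ x y, g (x + y) = g x + g y)
    (hsmul : ∀ (c : R) x, g (c • x) = c ^ 2 • g x) (hb : ∀ i, g (b i) = 0) (x : M) :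
    g x = 0 := by
  have hx : x ∈ Submodule.span R (Set.range b) := b.span_eq ▸ Submodule.mem_top
  induction hx using Submodule.span_induction with
  | mem z hz => obtain ⟨i, rfl⟩ := hz; exact hb i
  | zero => simpa using hsmul 0 0
  | add u v _ _ hu hv => rw [hadd, hu, hv, add_zero]
  | smul c u _ hu => rw [hsmul, hu, smul_zero]

section QuadraticOnExteriorPower

variable {ι R M : Type*} [CommRing R] [AddCommGroup M] [Module R M] {n : ℕ}
  {Q : ⋀[R]^n M → ExteriorAlgebra R M}

lemma map_ιMulti_eq_zero_of_update_basis (b : Module.Basis ι R M) (hn : 1 < n)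
    (hquad : ∀ (c : R) v, Q (c • v) = c ^ 2 • Q v)
    (hpolar : ∀ v w, Q (v + w) = Q v + Q w + (v : ExteriorAlgebra R M) * w)
    (f : Fin n → M) (i : Fin n)
    (hupdate : ∀ l, Q (exteriorPower.ιMulti R n (Function.update f i (b l))) = 0) :
    Q (exteriorPower.ιMulti R n f) = 0 := by
  have : Nontrivial (Fin n) := Fin.nontrivial_iff_two_le.mpr hn
  obtain ⟨j, hji⟩ := exists_ne i
  have hadd : ∀ x y, Q (exteriorPower.ιMulti R n (Function.update f i (x + y)))
      = Q (exteriorPower.ιMulti R n (Function.update f i x))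
        + Q (exteriorPower.ιMulti R n (Function.update f i y)) := by
    intro x y
    rw [AlternatingMap.map_update_add, hpolar, exteriorPower.ιMulti_apply_coe,
      exteriorPower.ιMulti_apply_coe,
      ιMulti_mul_ιMulti_eq_zero_of_apply_eq (i := j) (j := j)
        (by rw [Function.update_of_ne hji, Function.update_of_ne hji]), add_zero]
  have hsmul : ∀ (c : R) x, Q (exteriorPower.ιMulti R n (Function.update f i (c • x)))
      = c ^ 2 • Q (exteriorPower.ιMulti R n (Function.update f i x)) := by
    intro c x
    rw [AlternatingMap.map_update_smul, hquad]
  simpa using b.eq_zero_of_map_add_of_map_smul_sq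
    (g := fun x => Q (exteriorPower.ιMulti R n (Function.update f i x))) hadd hsmul hupdate (f i)

lemma map_ιMulti_eq_zero_of_basis (b : Module.Basis ι R M) (hn : 1 < n)
    (hquad : ∀ (c : R) v, Q (c • v) = c ^ 2 • Q v)
    (hpolar : ∀ v w, Q (v + w) = Q v + Q w + (v : ExteriorAlgebra R M) * w)
    (hbasis : ∀ s : Fin n → ι, Q (exteriorPower.ιMulti R n (b ∘ s)) = 0) (f : Fin n → M) :
    Q (exteriorPower.ιMulti R n f) = 0 := by
  suffices ∀ t : Finset (Fin n), ∀ f : Fin n → M, (∀ i ∉ t, f i ∈ Set.range b) →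
      Q (exteriorPower.ιMulti R n f) = 0 from this Finset.univ f (by simp)
  intro t
  induction t using Finset.induction_on with
  | empty =>
    intro f hf
    choose s hs using fun i => hf i (Finset.notMem_empty i)
    obtain rfl : f = b ∘ s := funext fun i => (hs i).symm
    exact hbasis s
  | insert i t _ ih =>
    refine fun f hf => map_ιMulti_eq_zero_of_update_basis b hn hquad hpolar f i fun l =>
      ih _ fun j hj => ?_
    by_cases hji : j = i
    · subst hji
      simp
    · rw [Function.update_of_ne hji]
      exact hf j (by simp [hji, hj])

end QuadraticOnExteriorPower

theorem stmt_8_general (k : Type*) [Field k]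
    (V : Type*) [AddCommGroup V] [Module k V]
    (ι : Type*) (b : Module.Basis ι k V) (n : ℕ) (hn : 1 < n)
    (Q : (⋀[k]^n V) → ExteriorAlgebra k V)
    (hquad : ∀ (c : k) (v), Q (c • v) = c ^ 2 • Q v)
    (hpolar : ∀ v w, Q (v + w)
        = Q v + Q w + (v : ExteriorAlgebra k V) * (w : ExteriorAlgebra k V))
    (hbasis : ∀ s : Fin n → ι, Function.Injective s →
        Q ⟨ιMulti k n (fun i => b (s i)),
            ιMulti_range k n (Set.mem_range_self _)⟩ = 0) :
    ∀ f : Fin n → V, Q ⟨ιMulti k n f, ιMulti_range k n (Set.mem_range_self f)⟩ = 0 := by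
  have hQ0 : Q 0 = 0 := by simpa using hquad 0 0
  refine fun f => map_ιMulti_eq_zero_of_basis b hn hquad hpolar (fun s => ?_) f
  by_cases hs : Function.Injective s
  · exact hbasis s hs
  · rw [AlternatingMap.map_eq_zero_of_not_injective _ _ fun h => hs h.of_comp, hQ0]

/-- Over a field of characteristic 2, let `V` have a basis `b` and let
`k > 1`.  Suppose `Q : ⋀ᵏV → ⋀²ᵏV` satisfies `Q(c•v) = c²•Q(v)`,
`Q(v+w) = Q(v) + Q(w) + v ∧ w`, and `Q` vanishes on all wedges of `k` distinct basis
vectors (these conditions pin down the `Q` defined on sums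
`v₁ + ⋯ + v_r` of distinct basis pure tensors by `Q(v₁+⋯+v_r) = ∑_{i<j} vᵢ ∧ vⱼ`).
Then `Q` vanishes on every pure tensor `w₁ ∧ ⋯ ∧ w_k`. -/
theorem stmt_8 (k : Type*) [Field k] (hchar : ringChar k = 2)
    (V : Type*) [AddCommGroup V] [Module k V]
    (ι : Type*) (b : Module.Basis ι k V) (n : ℕ) (hn : 1 < n)
    (Q : (⋀[k]^n V) → ExteriorAlgebra k V)
    (hquad : ∀ (c : k) (v), Q (c • v) = c ^ 2 • Q v)
    (hpolar : ∀ v w, Q (v + w)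
        = Q v + Q w + (v : ExteriorAlgebra k V) * (w : ExteriorAlgebra k V))
    (hbasis : ∀ s : Fin n → ι, Function.Injective s →
        Q ⟨ιMulti k n (fun i => b (s i)),
            ιMulti_range k n (Set.mem_range_self _)⟩ = 0) :
    ∀ f : Fin n → V, Q ⟨ιMulti k n f, ιMulti_range k n (Set.mem_range_self f)⟩ = 0 :=
  stmt_8_general k V ι b n hn Q hquad hpolar hbasis
end

section
/- Let $V_8$ be an $8$-dimensional vector space over a field $\mathbf{k}$, let $U \subset V_8$ be a $5$-dimensional subspace, and let $W = V_8/U$. Consider the element $\gamma' = u_1 \wedge u_2 \wedge u_3 \in \bigwedge^3 W^*$ where $u_1, u_2, u_3$ is a basis of $W^*$, viewed as an element of $\bigwedge^3 V_8^*$. Then for $\gamma \in \bigwedge^3 V_8$, the bracket $[\gamma, \gamma']$ in the graded Lie algebra structure (with bracket landing in $\mathfrak{gl}(V_8)$) vanishes if and only if $\gamma$ lies in the subspace $\bigwedge^3 U + \bigwedge^2 U \wedge V_8$ (i.e., the image of $\bigwedge^3 U \oplus \bigwedge^2 U \otimes V_8$ in $\bigwedge^3 V_8$). -/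
open ExteriorAlgebra Module

variable {k : Type*} [Field k] {V : Type*} [AddCommGroup V] [Module k V]

/-- The alternating 3-form `(v₁,v₂,v₃) ↦ det (uᵢ(vⱼ))` on `V` attached to a triple of
linear functionals `u₀, u₁, u₂`; this is the pairing with `u₀ ∧ u₁ ∧ u₂ ∈ ⋀³V^*`. -/
noncomputable def detForm (u : Fin 3 → Dual k V) : V [⋀^Fin 3]→ₗ[k] k :=
  Matrix.detRowAlternating.compLinearMap (LinearMap.pi u)

/-- The alternating 3-form `(v₁,v₂,v₃) ↦ ⟨Av₁∧v₂∧v₃ + v₁∧Av₂∧v₃ + v₁∧v₂∧Av₃,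
u₀∧u₁∧u₂⟩`, i.e. the pairing of the derivation action of `A ∈ gl(V)` on `⋀³V` with
`u₀ ∧ u₁ ∧ u₂ ∈ ⋀³V^*`. -/
noncomputable def derivPairingForm (u : Fin 3 → Dual k V) (A : Module.End k V) :
    V [⋀^Fin 3]→ₗ[k] k where
  toMultilinearMap :=
    ∑ l : Fin 3, (detForm u).toMultilinearMap.compLinearMap
      (fun m => if m = l then (A : V →ₗ[k] V) else LinearMap.id)
  map_eq_zero_of_eq' := by
    intro v i j hv hij
    show (∑ l : Fin 3, (detForm u).toMultilinearMap.compLinearMap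
      (fun m => if m = l then (A : V →ₗ[k] V) else LinearMap.id)) v = 0
    have key : ∀ l : Fin 3,
        ((detForm u).toMultilinearMap.compLinearMap
          (fun m => if m = l then (A : V →ₗ[k] V) else LinearMap.id)) v
        = detForm u (Function.update v l (A (v l))) := by
      intro l
      have harg : (fun c => (if c = l then (A : V →ₗ[k] V) else LinearMap.id) (v c))
          = Function.update v l (A (v l)) := by
        funext c
        by_cases hc : c = l
        · subst hc; simp
        · simp [hc, Function.update_of_ne hc]
      rw [MultilinearMap.compLinearMap_apply]
      show detForm u (fun c => (if c = l then (A : V →ₗ[k] V) else LinearMap.id) (v c)) = _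
      rw [harg]
    rw [MultilinearMap.sum_apply]
    have hji : j ≠ i := Ne.symm hij
    calc ∑ l : Fin 3, ((detForm u).toMultilinearMap.compLinearMap
          (fun m => if m = l then (A : V →ₗ[k] V) else LinearMap.id)) v
        = ∑ l : Fin 3, detForm u (Function.update v l (A (v l))) :=
          Finset.sum_congr rfl (fun l _ => key l)
      _ = 0 := by
          have hsplit : (Finset.univ : Finset (Fin 3))
              = insert i (insert j (Finset.univ \ {i, j})) := by
            ext c
            simp only [Finset.mem_insert, Finset.mem_sdiff, Finset.mem_univ, true_and,
              Finset.mem_singleton]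
            tauto
          rw [hsplit, Finset.sum_insert (by simp [hij]), Finset.sum_insert (by simp)]
          have hrest : ∑ l ∈ Finset.univ \ {i, j},
              detForm u (Function.update v l (A (v l))) = 0 := by
            apply Finset.sum_eq_zero
            intro l hl
            simp only [Finset.mem_sdiff, Finset.mem_insert, Finset.mem_singleton,
              Finset.mem_univ, true_and] at hl
            push_neg at hl
            apply AlternatingMap.map_eq_zero_of_eq _ _ (i := i) (j := j) _ hij
            rw [Function.update_of_ne (fun h => hl.1 h.symm),
              Function.update_of_ne (fun h => hl.2 h.symm)]
            exact hv
          rw [hrest, add_zero]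
          have hswap : Function.update v j (A (v j))
              = (Function.update v i (A (v i))) ∘ (Equiv.swap i j) := by
            funext c
            by_cases hcj : c = j
            · subst hcj
              show Function.update v c (A (v c)) c
                  = Function.update v i (A (v i)) (Equiv.swap i c c)
              rw [Equiv.swap_apply_right, Function.update_self, Function.update_self, hv]
            · by_cases hci : c = i
              · subst hci
                show Function.update v j (A (v j)) c
                    = Function.update v c (A (v c)) (Equiv.swap c j c)
                rw [Equiv.swap_apply_left, Function.update_of_ne hij,
                  Function.update_of_ne hji, hv]
              · show Function.update v j (A (v j)) c
                    = Function.update v i (A (v i)) (Equiv.swap i j c)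
                rw [Equiv.swap_apply_of_ne_of_ne hci hcj, Function.update_of_ne hcj,
                  Function.update_of_ne hci]
          rw [hswap, AlternatingMap.map_swap _ _ hij]
          ring

/-- The linear functional `γ ↦ ⟨A·γ, u₀∧u₁∧u₂⟩` on the exterior algebra (supported in
degree 3), where `A·γ` is the derivation action of `A ∈ gl(V) = 𝔤₀` on `⋀³V = 𝔤₁`.
Its vanishing for all `A` is equivalent to `[γ, u₀∧u₁∧u₂] = 0` in `𝔤₀ = gl(V)`,
since `trace([γ,γ']∘A) = ⟨A·γ, γ'⟩` and the trace pairing on `gl(V)` is perfect. -/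
noncomputable def bracketPairing (u : Fin 3 → Dual k V) (A : Module.End k V) :
    ExteriorAlgebra k V →ₗ[k] k :=
  ExteriorAlgebra.liftAlternating
    (fun i => match i with
      | 3 => derivPairingForm u A
      | _ => 0)

/-! Choose `f₀, f₁, f₂ ∈ V` dual to `u₀, u₁, u₂`. The dimensions force `U = ⋂ ker uᵢ`, so
`V = U ⊕ span f` and every `γ ∈ ⋀³V` is `s + ∑ₘ xₘ ∧ f_{m+1} ∧ f_{m+2} + t f₀ ∧ f₁ ∧ f₂` with
`s ∈ ⋀³U + ⋀²U ∧ V` and `xₘ ∈ U`. The pairing `⟨A·γ, γ'⟩` vanishes on `⋀³U + ⋀²U ∧ V` since each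
term of the derivation keeps a factor from `U`, and for the rank-one `A = φ ⊗ fₘ` it equals
`φ(xₘ) + t φ(fₘ)`. Taking `φ = uₘ` gives `t = 0`, and then arbitrary `φ` gives `xₘ = 0`. -/

section DetForm

variable (u : Fin 3 → Dual k V)

theorem detForm_apply (w : Fin 3 → V) :
    detForm u w = Matrix.det (Matrix.of fun j i => u i (w j)) := rfl

theorem detForm_eq_zero_of_apply_eq_zero {w : Fin 3 → V} (j : Fin 3)
    (h : ∀ i, u i (w j) = 0) : detForm u w = 0 := by
  rw [detForm_apply]
  exact Matrix.det_eq_zero_of_row_eq_zero j fun i => h i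

variable {u} {f : Fin 3 → V} (hf : ∀ i j, u i (f j) = if i = j then 1 else 0)
include hf

theorem detForm_dual_eq_one : detForm u f = 1 := by
  rw [detForm_apply]
  convert Matrix.det_one (n := Fin 3) (R := k) using 2
  ext j i
  simp [hf, Matrix.one_apply, eq_comm]

theorem detForm_dual_cyclic (m n : Fin 3) :
    detForm u ![f m, f (n + 1), f (n + 2)] = if m = n then 1 else 0 := by
  fin_cases m <;> fin_cases n <;> simp [detForm_apply, Matrix.det_fin_three, hf]

end DetForm

theorem AlternatingMap.map_comp_mem_span_singleton {R M N ι : Type*} [CommRing R]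
    [AddCommGroup M] [Module R M] [AddCommGroup N] [Module R N] [Fintype ι] [DecidableEq ι]
    (F : M [⋀^ι]→ₗ[R] N) (v : ι → M) (g : ι → ι) : F (v ∘ g) ∈ R ∙ F v := by
  by_cases hg : Function.Injective g
  · rw [show v ∘ g = v ∘ Equiv.ofBijective g hg.bijective_of_finite from rfl, F.map_perm]
    exact Submodule.smul_of_tower_mem _ _ (Submodule.mem_span_singleton_self _)
  · rw [F.map_eq_zero_of_not_injective _ fun h => hg h.of_comp]
    exact zero_mem _

theorem LinearMap.pi_surjective_of_linearIndependent {ι : Type*} [Fintype ι]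
    {u : ι → Dual k V} (hu : LinearIndependent k u) : Function.Surjective (LinearMap.pi u) := by
  classical
  rw [← LinearMap.dualMap_injective_iff, injective_iff_map_eq_zero]
  intro ψ hψ
  have hcomb : ∑ i, ψ (fun j => if i = j then 1 else 0) • u i = 0 := by
    ext v
    have hv := LinearMap.congr_fun hψ v
    rw [LinearMap.dualMap_apply, LinearMap.pi_apply_eq_sum_univ] at hv
    simpa [mul_comm] using hv
  have hzero := Fintype.linearIndependent_iff.mp hu _ hcomb
  refine LinearMap.ext fun x => ?_
  rw [LinearMap.pi_apply_eq_sum_univ]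
  simp [hzero]

noncomputable def wedgeTwoIn (U : Submodule k V) : Submodule k (ExteriorAlgebra k V) :=
  Submodule.span k {x | ∃ v : Fin 3 → V, v 0 ∈ U ∧ v 1 ∈ U ∧ x = ιMulti k 3 v}

section BracketPairing

variable (u : Fin 3 → Dual k V)

theorem bracketPairing_ιMulti (A : Module.End k V) (w : Fin 3 → V) :
    bracketPairing u A (ιMulti k 3 w) =
      ∑ l, detForm u (Function.update w l (A (w l))) := by
  rw [bracketPairing, liftAlternating_apply_ιMulti]
  change (∑ l : Fin 3, (detForm u).toMultilinearMap.compLinearMap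
      (fun m => if m = l then A else LinearMap.id)) w = _
  rw [sum_apply]
  refine Finset.sum_congr rfl fun l _ => ?_
  change detForm u (fun c => (if c = l then A else LinearMap.id) (w c)) = _
  congr 1
  funext c
  by_cases hc : c = l
  · subst hc; simp
  · simp [hc]

theorem bracketPairing_smulRight_ιMulti (φ : Dual k V) (y : V) (w : Fin 3 → V) :
    bracketPairing u (φ.smulRight y) (ιMulti k 3 w) =
      ∑ l, φ (w l) * detForm u (Function.update w l y) := by
  simp only [bracketPairing_ιMulti, LinearMap.smulRight_apply, AlternatingMap.map_update_smul,
    smul_eq_mul]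

variable {u} {U : Submodule k V} (huU : ∀ i, ∀ x ∈ U, u i x = 0)
include huU

theorem bracketPairing_eq_zero_of_mem_wedgeTwoIn (A : Module.End k V) {γ : ExteriorAlgebra k V}
    (hγ : γ ∈ wedgeTwoIn U) : bracketPairing u A γ = 0 := by
  induction hγ using Submodule.span_induction with
  | mem _ hx =>
    obtain ⟨v, hv0, hv1, rfl⟩ := hx
    rw [bracketPairing_ιMulti, Fin.sum_univ_three,
      detForm_eq_zero_of_apply_eq_zero u 1 fun i => by simpa using huU i _ hv1,
      detForm_eq_zero_of_apply_eq_zero u 0 fun i => by simpa using huU i _ hv0,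
      detForm_eq_zero_of_apply_eq_zero u 0 fun i => by simpa using huU i _ hv0]
    simp
  | zero => simp
  | add _ _ _ _ hx hy => rw [map_add, hx, hy, add_zero]
  | smul _ _ _ hx => rw [map_smul, hx, smul_zero]

end BracketPairing

section Decomposition

theorem ιMulti_swap_zero_one (a b c : V) :
    ιMulti k 3 ![a, b, c] = -ιMulti k 3 ![b, a, c] := by
  rw [← (ιMulti k 3).map_swap ![b, a, c] (i := 0) (j := 1) (by decide)]
  congr 1
  funext i
  fin_cases i <;> rfl

theorem ιMulti_swap_zero_two (a b c : V) :
    ιMulti k 3 ![a, b, c] = -ιMulti k 3 ![c, b, a] := by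
  rw [← (ιMulti k 3).map_swap ![c, b, a] (i := 0) (j := 2) (by decide)]
  congr 1
  funext i
  fin_cases i <;> rfl

theorem ιMulti_swap_one_two (a b c : V) :
    ιMulti k 3 ![a, b, c] = -ιMulti k 3 ![a, c, b] := by
  rw [← (ιMulti k 3).map_swap ![a, c, b] (i := 1) (j := 2) (by decide)]
  congr 1
  funext i
  fin_cases i <;> rfl

noncomputable def wedgePair (a b : V) : V →ₗ[k] ExteriorAlgebra k V :=
  (ιMulti k 3).toMultilinearMap.toLinearMap ![0, a, b] 0

theorem wedgePair_apply (a b x : V) : wedgePair a b x = ιMulti k 3 ![x, a, b] := by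
  rw [wedgePair, MultilinearMap.toLinearMap_apply]
  exact congrArg (ιMulti k 3) (by funext i; fin_cases i <;> rfl)

/-- The indices are cyclic so that `⟨(φ ⊗ fₘ)·(x ∧ f_{n+1} ∧ f_{n+2}), u₀ ∧ u₁ ∧ u₂⟩ = δₘₙ φ(x)`
carries no sign. -/
noncomputable def wedgeComplement (U : Submodule k V) (f : Fin 3 → V) :
    (Fin 3 → U) × k →ₗ[k] ExteriorAlgebra k V :=
  (∑ m, wedgePair (f (m + 1)) (f (m + 2)) ∘ₗ U.subtype ∘ₗ LinearMap.proj m) ∘ₗ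
      LinearMap.fst k _ k +
    (LinearMap.snd k _ k).smulRight (ιMulti k 3 f)

variable {U : Submodule k V} {f : Fin 3 → V}

theorem wedgeComplement_apply (x : Fin 3 → U) (t : k) :
    wedgeComplement U f (x, t) =
      ∑ m, ιMulti k 3 ![(x m : V), f (m + 1), f (m + 2)] + t • ιMulti k 3 f := by
  simp [wedgeComplement, wedgePair_apply, -ιMulti_succ_apply]

theorem ιMulti_mem_wedgeTwoIn {a b : V} (ha : a ∈ U) (hb : b ∈ U) (c : V) :
    ιMulti k 3 ![a, b, c] ∈ wedgeTwoIn U :=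
  Submodule.subset_span ⟨_, ha, hb, rfl⟩

theorem ιMulti_mem_range_wedgeComplement {x : V} (hx : x ∈ U) (p q : Fin 3) :
    ιMulti k 3 ![x, f p, f q] ∈ LinearMap.range (wedgeComplement U f) := by
  classical
  by_cases hpq : p = q
  · subst hpq
    rw [(ιMulti k 3).map_eq_zero_of_eq _ (i := 1) (j := 2) rfl (by decide)]
    exact zero_mem _
  have hcyclic (m : Fin 3) : ιMulti k 3 ![x, f (m + 1), f (m + 2)] ∈
      LinearMap.range (wedgeComplement U f) := by
    refine ⟨(Pi.single m ⟨x, hx⟩, 0), ?_⟩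
    rw [wedgeComplement_apply, Finset.sum_eq_single m]
    · simp [-ιMulti_succ_apply]
    · intro n _ hn
      exact (ιMulti k 3).map_coord_zero 0 (by simp [hn])
    · simp
  obtain ⟨m, rfl, rfl⟩ | ⟨m, rfl, rfl⟩ :
      (∃ m, p = m + 1 ∧ q = m + 2) ∨ (∃ m, p = m + 2 ∧ q = m + 1) := by
    revert hpq; fin_cases p <;> fin_cases q <;> decide
  · exact hcyclic m
  · rw [ιMulti_swap_one_two]
    exact neg_mem (hcyclic m)

theorem ιMulti_comp_mem_range_wedgeComplement (g : Fin 3 → Fin 3) :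
    ιMulti k 3 (f ∘ g) ∈ LinearMap.range (wedgeComplement U f) := by
  obtain ⟨t, ht⟩ := Submodule.mem_span_singleton.mp
    ((ιMulti k 3).map_comp_mem_span_singleton f g)
  exact ⟨(0, t), by simp [wedgeComplement, ht, -ιMulti_succ_apply]⟩

theorem ιMulti_mem_of_mem_or_mem_range {a b c : V} (ha : a ∈ U ∨ a ∈ Set.range f)
    (hb : b ∈ U ∨ b ∈ Set.range f) (hc : c ∈ U ∨ c ∈ Set.range f) :
    ιMulti k 3 ![a, b, c] ∈ wedgeTwoIn U ⊔ LinearMap.range (wedgeComplement U f) := by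
  rcases ha with ha | ⟨p, rfl⟩ <;> rcases hb with hb | ⟨q, rfl⟩ <;>
    rcases hc with hc | ⟨r, rfl⟩
  · exact Submodule.mem_sup_left (ιMulti_mem_wedgeTwoIn ha hb _)
  · exact Submodule.mem_sup_left (ιMulti_mem_wedgeTwoIn ha hb _)
  · rw [ιMulti_swap_one_two]
    exact neg_mem (Submodule.mem_sup_left (ιMulti_mem_wedgeTwoIn ha hc _))
  · exact Submodule.mem_sup_right (ιMulti_mem_range_wedgeComplement ha q r)
  · rw [ιMulti_swap_zero_two]
    exact neg_mem (Submodule.mem_sup_left (ιMulti_mem_wedgeTwoIn hc hb _))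
  · rw [ιMulti_swap_zero_one]
    exact neg_mem (Submodule.mem_sup_right (ιMulti_mem_range_wedgeComplement hb p r))
  · rw [ιMulti_swap_zero_two]
    exact neg_mem (Submodule.mem_sup_right (ιMulti_mem_range_wedgeComplement hc q p))
  · have hcomp : ![f p, f q, f r] = f ∘ ![p, q, r] := by funext i; fin_cases i <;> rfl
    rw [hcomp]
    exact Submodule.mem_sup_right (ιMulti_comp_mem_range_wedgeComplement _)

variable {u : Fin 3 → Dual k V} (hf : ∀ i j, u i (f j) = if i = j then 1 else 0)
  (hker : LinearMap.ker (LinearMap.pi u) ≤ U)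
include hf hker

theorem span_union_range_eq_top : Submodule.span k ((U : Set V) ∪ Set.range f) = ⊤ := by
  rw [Submodule.span_union, Submodule.span_eq, eq_top_iff]
  intro v _
  have hproj : v - ∑ i, u i v • f i ∈ U := hker <| by
    ext m
    simp [hf]
  rw [← sub_add_cancel v (∑ i, u i v • f i)]
  exact Submodule.add_mem_sup hproj <|
    Submodule.sum_mem _ fun i _ => Submodule.smul_mem _ _ (Submodule.subset_span ⟨i, rfl⟩)

theorem exteriorPower_three_le_wedgeTwoIn_sup :
    ⋀[k]^3 V ≤ wedgeTwoIn U ⊔ LinearMap.range (wedgeComplement U f) := by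
  rw [← exteriorPower.ιMulti_span_fixedDegree_of_span_eq_top k 3 V
    (span_union_range_eq_top hf hker), Submodule.span_le]
  rintro _ ⟨v, hv, rfl⟩
  have hv' (i : Fin 3) : v i ∈ U ∨ v i ∈ Set.range f := hv ⟨i, rfl⟩
  rw [← FinVec.etaExpand_eq v]
  exact ιMulti_mem_of_mem_or_mem_range (hv' 0) (hv' 1) (hv' 2)

end Decomposition

section Evaluation

variable {u : Fin 3 → Dual k V} {f : Fin 3 → V}
  (hf : ∀ i j, u i (f j) = if i = j then 1 else 0)
include hf

theorem bracketPairing_smulRight_ιMulti_cyclic (φ : Dual k V) (m n : Fin 3) {x : V}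
    (hx : ∀ i, u i x = 0) :
    bracketPairing u (φ.smulRight (f m)) (ιMulti k 3 ![x, f (n + 1), f (n + 2)]) =
      if m = n then φ x else 0 := by
  rw [bracketPairing_smulRight_ιMulti, Fin.sum_univ_three]
  have hslot₀ : Function.update ![x, f (n + 1), f (n + 2)] 0 (f m) =
      ![f m, f (n + 1), f (n + 2)] :=
    Fin.update_cons_zero _ _ _
  rw [hslot₀, detForm_dual_cyclic hf,
    detForm_eq_zero_of_apply_eq_zero u 0 fun i => by simpa using hx i,
    detForm_eq_zero_of_apply_eq_zero u 0 fun i => by simpa using hx i]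
  simp

theorem bracketPairing_smulRight_ιMulti_dual (φ : Dual k V) (m : Fin 3) :
    bracketPairing u (φ.smulRight (f m)) (ιMulti k 3 f) = φ (f m) := by
  rw [bracketPairing_smulRight_ιMulti, Finset.sum_eq_single m]
  · simp [detForm_dual_eq_one hf]
  · intro l _ hl
    have hrepeat : Function.update f l (f m) l = Function.update f l (f m) m := by
      rw [Function.update_self, Function.update_of_ne hl.symm]
    rw [(detForm u).map_eq_zero_of_eq _ hrepeat hl, mul_zero]
  · simp

theorem bracketPairing_smulRight_wedgeComplement {U : Submodule k V}
    (huU : ∀ i, ∀ x ∈ U, u i x = 0) (φ : Dual k V) (m : Fin 3) (x : Fin 3 → U) (t : k) :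
    bracketPairing u (φ.smulRight (f m)) (wedgeComplement U f (x, t)) =
      φ (x m) + t * φ (f m) := by
  rw [wedgeComplement_apply, map_add, map_sum, map_smul, bracketPairing_smulRight_ιMulti_dual hf]
  rw [Finset.sum_congr rfl fun n _ =>
    bracketPairing_smulRight_ιMulti_cyclic hf φ m n fun i => huU i _ (x n).2]
  simp

end Evaluation

theorem mem_wedgeTwoIn_of_forall_bracketPairing_eq_zero {u : Fin 3 → Dual k V} {f : Fin 3 → V}
    {U : Submodule k V} (hf : ∀ i j, u i (f j) = if i = j then 1 else 0)
    (huU : ∀ i, ∀ x ∈ U, u i x = 0) (hker : LinearMap.ker (LinearMap.pi u) ≤ U)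
    {γ : ExteriorAlgebra k V} (hγ : γ ∈ ⋀[k]^3 V) (h : ∀ A, bracketPairing u A γ = 0) :
    γ ∈ wedgeTwoIn U := by
  obtain ⟨s, hs, _, ⟨⟨x, t⟩, rfl⟩, rfl⟩ :=
    Submodule.mem_sup.mp (exteriorPower_three_le_wedgeTwoIn_sup hf hker hγ)
  have hcoeff (m : Fin 3) (φ : Dual k V) : φ (x m) + t * φ (f m) = 0 := by
    have hA := h (φ.smulRight (f m))
    rwa [map_add, bracketPairing_eq_zero_of_mem_wedgeTwoIn huU _ hs, zero_add,
      bracketPairing_smulRight_wedgeComplement hf huU] at hA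
  have ht : t = 0 := by simpa [huU _ _ (x 0).2, hf] using hcoeff 0 (u 0)
  have hx : x = 0 := funext fun m => Subtype.ext <|
    (Module.forall_dual_apply_eq_zero_iff k _).mp fun φ => by simpa [ht] using hcoeff m φ
  rwa [ht, hx, Prod.mk_zero_zero, map_zero, add_zero]

theorem exists_dual_family_of_linearIndependent {ι : Type*} [Fintype ι] [DecidableEq ι]
    {u : ι → Dual k V} (hu : LinearIndependent k u) :
    ∃ f : ι → V, ∀ i j, u i (f j) = if i = j then 1 else 0 := by
  choose f hf using LinearMap.pi_surjective_of_linearIndependent hu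
  exact ⟨fun j => f (Pi.single j 1), fun i j => by
    simpa [Pi.single_apply] using congr_fun (hf (Pi.single j 1)) i⟩

theorem ker_pi_le_of_finrank_add_eq {ι : Type*} [Fintype ι] [FiniteDimensional k V]
    {u : ι → Dual k V} (hu : LinearIndependent k u) {U : Submodule k V}
    (huU : ∀ i, ∀ x ∈ U, u i x = 0) (hdim : finrank k U + Fintype.card ι = finrank k V) :
    LinearMap.ker (LinearMap.pi u) ≤ U := by
  have hle : U ≤ LinearMap.ker (LinearMap.pi u) := fun x hx =>
    LinearMap.mem_ker.mpr (funext fun i => huU i x hx)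
  have hrank := LinearMap.finrank_range_add_finrank_ker (LinearMap.pi u)
  rw [LinearMap.range_eq_top.mpr (LinearMap.pi_surjective_of_linearIndependent hu),
    finrank_top, Module.finrank_fintype_fun_eq_card] at hrank
  exact (Submodule.eq_of_le_of_finrank_le hle (by omega)).ge

/-- Let `V₈` be 8-dimensional, `U ⊂ V₈` a 5-dimensional subspace, and
`u₀, u₁, u₂` a basis of `(V₈/U)^*` (linearly independent functionals vanishing on
`U`), giving `γ' = u₀ ∧ u₁ ∧ u₂ ∈ ⋀³V₈^*`.  For `γ ∈ ⋀³V₈`, the bracket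
`[γ, γ'] ∈ gl(V₈)` (of the `ℤ`-grading of `e₈` with `𝔤₋₁ = ⋀³V₈^*`, `𝔤₀ = gl(V₈)`,
`𝔤₁ = ⋀³V₈`) vanishes — equivalently, `⟨A·γ, γ'⟩ = 0` for every `A ∈ gl(V₈)` —
if and only if `γ ∈ ⋀³U + ⋀²U ∧ V₈`. -/
theorem stmt_11 [FiniteDimensional k V] (hV : Module.finrank k V = 8)
    (U : Submodule k V) (hU : Module.finrank k U = 5)
    (u : Fin 3 → Dual k V) (hu : LinearIndependent k u)
    (huU : ∀ i, ∀ x ∈ U, u i x = 0)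
    (γ : ExteriorAlgebra k V) (hγ : γ ∈ ⋀[k]^3 V) :
    (∀ A : Module.End k V, bracketPairing u A γ = 0) ↔
      γ ∈ Submodule.span k
        {x | ∃ v : Fin 3 → V, v 0 ∈ U ∧ v 1 ∈ U ∧ x = ιMulti k 3 v} := by
  obtain ⟨f, hf⟩ := exists_dual_family_of_linearIndependent hu
  have hker := ker_pi_le_of_finrank_add_eq hu huU (by simp [hU, hV])
  exact ⟨mem_wedgeTwoIn_of_forall_bracketPairing_eq_zero hf huU hker hγ,
    fun hmem A => bracketPairing_eq_zero_of_mem_wedgeTwoIn huU A hmem⟩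
end
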